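/- If a convex closed curve γ₁ lies completely inside a convex closed curve γ₂ in the Euclidean plane, then the perimeter (length) of γ₁ is strictly less than the perimeter of γ₂ (assuming γ₁ ≠ γ₂). -/

import Mathlib

/-!
The nearest-point map `P` onto a closed convex set `K` is 1-Lipschitz, and if `v` is an outer
normal of `K` at `x`, the ray `x + t • v` leaves any bounded `L ⊇ K` through a point of
`frontier L` which `P` sends back to `x`. So `P` maps `frontier L` onto `frontier K`, and the
perimeter is monotone.

For strictness, separate a point `p ∈ K₂ \ K₁` from `K₁` by a line `⟪n, ·⟫ = c`. As `K₁` lies in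
`K₂ ∩ {⟪n, ·⟫ ≤ c}`, it suffices that cutting off the cap beyond the line decreases the perimeter,
i.e. that the chord `[a, b] = K₂ ∩ {⟪n, ·⟫ = c}` is shorter than the arc of `frontier K₂` beyond
it. Projecting that arc onto the triangle `a p b` covers the sides `[a, p]` and `[p, b]`, and
`|a - b| < |a - p| + |p - b|`. Perimeters are finite (compare with a circle), so the strict
inequality survives adding the part of `frontier K₂` below the line.
-/

open MeasureTheory Set Metric
open scoped ENNReal RealInnerProductSpace Convex ComplexConjugate

theorem IsPreconnected.inter_frontier_nonempty {X : Type*} [TopologicalSpace X] {s t : Set X}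
    (hs : IsPreconnected s) (hst : (s ∩ t).Nonempty) (hst' : (s \ t).Nonempty) :
    (s ∩ frontier t).Nonempty := by
  by_contra h
  rw [not_nonempty_iff_eq_empty, ← disjoint_iff_inter_eq_empty] at h
  have hcover : s ⊆ interior t ∪ (closure t)ᶜ := fun z hz => by
    by_cases hzi : z ∈ interior t
    · exact Or.inl hzi
    · exact Or.inr fun hzc => h.notMem_of_mem_left hz ⟨hzc, hzi⟩
  obtain ⟨x, hxs, hxt⟩ := hst
  obtain ⟨y, hys, hyt⟩ := hst'
  obtain ⟨z, -, hzi, hzc⟩ := hs _ _ isOpen_interior isClosed_closure.isOpen_compl hcover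
    ⟨x, hxs, (hcover hxs).resolve_right (not_not.2 (subset_closure hxt))⟩
    ⟨y, hys, (hcover hys).resolve_left fun hyi => hyt (interior_subset hyi)⟩
  exact hzc (interior_subset_closure hzi)

theorem frontier_inter_setOf_le_subset {X : Type*} [TopologicalSpace X] {K : Set X}
    {f g : X → ℝ} (hf : Continuous f) (hg : Continuous g) :
    frontier (K ∩ {x | f x ≤ g x}) ⊆ frontier K ∪ {x | f x = g x} :=
  (frontier_inter_subset _ _).trans <|
    union_subset_union inter_subset_left (inter_subset_right.trans (frontier_le_subset_eq hf hg))

section NearestPoint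

variable {E : Type*} [NormedAddCommGroup E] [InnerProductSpace ℝ E]

theorem dist_le_dist_of_inner_nonpos {z₁ z₂ p₁ p₂ : E} (h₁ : ⟪z₁ - p₁, p₂ - p₁⟫ ≤ 0)
    (h₂ : ⟪z₂ - p₂, p₁ - p₂⟫ ≤ 0) : dist p₁ p₂ ≤ dist z₁ z₂ := by
  have hsq : ‖p₁ - p₂‖ ^ 2 ≤ ‖z₁ - z₂‖ * ‖p₁ - p₂‖ := by
    have hexp : ⟪z₁ - z₂, p₁ - p₂⟫ = ‖p₁ - p₂‖ ^ 2 - ⟪z₁ - p₁, p₂ - p₁⟫ - ⟪z₂ - p₂, p₁ - p₂⟫ := by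
      rw [← real_inner_self_eq_norm_sq, ← neg_sub p₁ p₂, inner_neg_right, sub_neg_eq_add,
        ← inner_add_left, ← inner_sub_left]
      congr 1
      abel
    linarith [real_inner_le_norm (z₁ - z₂) (p₁ - p₂)]
  rw [dist_eq_norm, dist_eq_norm]
  nlinarith [norm_nonneg (p₁ - p₂), norm_nonneg (z₁ - z₂)]

/-- `P` is a nearest-point map onto `K`, described by its variational inequality. -/
def IsNearestPointMap (K : Set E) (P : E → E) : Prop :=
  ∀ z, P z ∈ K ∧ ∀ w ∈ K, ⟪z - P z, w - P z⟫ ≤ 0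

theorem exists_isNearestPointMap {K : Set E} (hne : K.Nonempty) (hK : IsComplete K)
    (hc : Convex ℝ K) : ∃ P, IsNearestPointMap K P := by
  choose P hPK hP using fun z => exists_norm_eq_iInf_of_complete_convex hne hK hc z
  exact ⟨P, fun z => ⟨hPK z, (norm_eq_iInf_iff_real_inner_le_zero hc (hPK z)).1 (hP z)⟩⟩

namespace IsNearestPointMap

variable {K : Set E} {P : E → E}

theorem lipschitzWith (hP : IsNearestPointMap K P) : LipschitzWith 1 P :=
  LipschitzWith.of_dist_le_mul fun z₁ z₂ => by
    simpa using dist_le_dist_of_inner_nonpos ((hP z₁).2 _ (hP z₂).1) ((hP z₂).2 _ (hP z₁).1)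

theorem apply_eq (hP : IsNearestPointMap K P) {z x : E} (hx : x ∈ K)
    (h : ∀ w ∈ K, ⟪z - x, w - x⟫ ≤ 0) : P z = x :=
  dist_le_zero.1 <| by
    simpa using dist_le_dist_of_inner_nonpos ((hP z).2 x hx) (h _ (hP z).1)

theorem apply_eq_self (hP : IsNearestPointMap K P) {x : E} (hx : x ∈ K) : P x = x :=
  hP.apply_eq hx fun w _ => by simp

theorem mem_image_frontier (hP : IsNearestPointMap K P) {L : Set E} (hKL : K ⊆ L)
    (hL : Bornology.IsBounded L) {x v : E} (hx : x ∈ K) (hv : v ≠ 0)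
    (hsupp : ∀ w ∈ K, ⟪v, w⟫ ≤ ⟪v, x⟫) : x ∈ P '' frontier L := by
  set ray : ℝ → E := fun t => x + t • v
  have hray : Continuous ray := by fun_prop
  obtain ⟨R, hR⟩ := hL.subset_closedBall x
  have hout : ray ((|R| + 1) / ‖v‖) ∉ L := fun h => by
    have := hR h
    rw [mem_closedBall, dist_eq_norm] at this
    simp only [ray, add_sub_cancel_left, norm_smul, Real.norm_eq_abs] at this
    rw [abs_of_pos (by positivity), div_mul_cancel₀ _ (norm_ne_zero_iff.2 hv)] at this
    linarith [le_abs_self R]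
  obtain ⟨_, ⟨t, ht, rfl⟩, hz⟩ := ((isPreconnected_Ici (a := (0 : ℝ))).image ray
    hray.continuousOn).inter_frontier_nonempty ⟨x, ⟨0, mem_Ici.2 le_rfl, by simp [ray]⟩, hKL hx⟩
    ⟨_, ⟨_, (by positivity : (0 : ℝ) ≤ (|R| + 1) / ‖v‖), rfl⟩, hout⟩
  refine ⟨ray t, hz, hP.apply_eq hx fun w hw => ?_⟩
  simp only [ray, add_sub_cancel_left, real_inner_smul_left, inner_sub_right, ← mul_sub]
  exact mul_nonpos_of_nonneg_of_nonpos ht (sub_nonpos.2 (hsupp w hw))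

variable [MeasurableSpace E] [BorelSpace E]

theorem hausdorffMeasure_image_le (hP : IsNearestPointMap K P) {d : ℝ} (hd : 0 ≤ d)
    (s : Set E) : μH[d] (P '' s) ≤ μH[d] s := by
  simpa using hP.lipschitzWith.hausdorffMeasure_image_le hd s

end IsNearestPointMap

theorem Convex.exists_forall_inner_le_of_notMem_interior [CompleteSpace E] {K : Set E}
    (hc : Convex ℝ K) (hi : (interior K).Nonempty) {x : E} (hx : x ∉ interior K) :
    ∃ v ≠ 0, ∀ w ∈ K, ⟪v, w⟫ ≤ ⟪v, x⟫ := by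
  obtain ⟨f, hf⟩ := geometric_hahn_banach_open_point hc.interior isOpen_interior hx
  set v := (InnerProductSpace.toDual ℝ E).symm f
  have hv : ∀ w, ⟪v, w⟫ = f w := fun w => InnerProductSpace.toDual_symm_apply
  refine ⟨v, fun h0 => ?_, fun w hw => ?_⟩
  · obtain ⟨y, hy⟩ := hi
    simpa [← hv, h0] using hf y hy
  · have hcl : closure (interior K) ⊆ {w | f w ≤ f x} :=
      closure_minimal (fun y hy => (hf y hy).le) (isClosed_le f.continuous continuous_const)
    rw [hc.closure_interior_eq_closure_of_nonempty_interior hi] at hcl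
    rw [hv, hv]
    exact hcl (subset_closure hw)

variable [CompleteSpace E] [MeasurableSpace E] [BorelSpace E]

theorem hausdorffMeasure_frontier_le_of_subset {K L : Set E} (hKc : IsClosed K)
    (hK : Convex ℝ K) (hKi : (interior K).Nonempty) (hL : Bornology.IsBounded L) (hKL : K ⊆ L)
    {d : ℝ} (hd : 0 ≤ d) : μH[d] (frontier K) ≤ μH[d] (frontier L) := by
  obtain ⟨P, hP⟩ := exists_isNearestPointMap (hKi.mono interior_subset) hKc.isComplete hK
  have hsub : frontier K ⊆ P '' frontier L := fun x hx => by
    rw [hKc.frontier_eq] at hx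
    obtain ⟨v, hv, hsupp⟩ := hK.exists_forall_inner_le_of_notMem_interior hKi hx.2
    exact hP.mem_image_frontier hKL hL hx.1 hv hsupp
  exact (measure_mono hsub).trans (hP.hausdorffMeasure_image_le hd _)

end NearestPoint

section Segments

variable {E : Type*} [NormedAddCommGroup E] [InnerProductSpace ℝ E] {a b p n : E} {c : ℝ}

theorem eq_left_of_mem_segment_of_inner_le {x : E} (hap : ⟪n, a⟫ < ⟪n, p⟫)
    (hx : x ∈ [a -[ℝ] p]) (hxa : ⟪n, x⟫ ≤ ⟪n, a⟫) : x = a := by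
  obtain ⟨s, t, hs, ht, hst, rfl⟩ := hx
  rw [inner_add_right, real_inner_smul_right, real_inner_smul_right, eq_sub_of_add_eq hst] at hxa
  obtain rfl : t = 0 := le_antisymm (by nlinarith) ht
  simp [eq_sub_of_add_eq hst]

variable [MeasurableSpace E] [BorelSpace E]

theorem edist_lt_hausdorffMeasure_segment_union (ha : ⟪n, a⟫ = c) (hb : ⟪n, b⟫ = c)
    (hp : c < ⟪n, p⟫) : edist a b < μH[1] ([a -[ℝ] p] ∪ [p -[ℝ] b]) := by
  have hpa : p ≠ a := by rintro rfl; linarith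
  rcases eq_or_ne a b with rfl | hab
  · rw [edist_self, segment_symm ℝ p a, union_self, hausdorffMeasure_segment]
    exact edist_pos.2 hpa.symm
  have hinter : [a -[ℝ] p] ∩ [p -[ℝ] b] ⊆ {p} := by
    rw [segment_symm ℝ a p]
    refine segment_inter_subset_endpoint_of_linearIndependent_sub ℝ
      (LinearIndependent.pair_iff.2 fun s t hst => ?_)
    have hinner := congrArg (⟪n, ·⟫) hst
    simp only [inner_add_right, real_inner_smul_right, inner_sub_right, ha, hb,
      inner_zero_right] at hinner
    obtain rfl : t = -s := by nlinarith
    rw [neg_smul, ← sub_eq_add_neg, ← smul_sub, sub_sub_sub_cancel_right,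
      smul_eq_zero, sub_eq_zero] at hst
    exact ⟨hst.resolve_right hab, by simp [hst.resolve_right hab]⟩
  have := Measure.nullSingletonClass_hausdorff E one_pos
  have hnull : μH[1] ([a -[ℝ] p] ∩ [p -[ℝ] b]) = 0 := measure_mono_null hinter (measure_singleton p)
  have hwbtw : ¬ Wbtw ℝ a p b := fun h => hp.ne' <|
    (convex_hyperplane (innerₛₗ ℝ n).isLinear c).segment_subset ha hb (mem_segment_iff_wbtw.2 h)
  have hseg : IsCompact [p -[ℝ] b] := by
    rw [← convexHull_pair (𝕜 := ℝ)]; exact (toFinite _).isCompact_convexHull ℝ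
  rw [← add_zero (μH[1] _), ← hnull, measure_union_add_inter₀ _ hseg.isClosed.nullMeasurableSet,
    hausdorffMeasure_segment, hausdorffMeasure_segment, edist_dist, edist_dist, edist_dist,
    ← ENNReal.ofReal_add dist_nonneg dist_nonneg]
  have hpos : 0 < dist a p + dist p b := add_pos_of_pos_of_nonneg (dist_pos.2 hpa.symm) dist_nonneg
  exact (ENNReal.ofReal_lt_ofReal_iff hpos).2 (dist_lt_dist_add_dist_iff.2 hwbtw)

theorem hausdorffMeasure_segment_union_le_inter_halfSpace (ha : ⟪n, a⟫ = c) (hb : ⟪n, b⟫ = c)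
    (hp : c < ⟪n, p⟫) :
    μH[1] ([a -[ℝ] p] ∪ [p -[ℝ] b]) ≤ μH[1] (([a -[ℝ] p] ∪ [p -[ℝ] b]) ∩ {z | c < ⟪n, z⟫}) := by
  have hends : ([a -[ℝ] p] ∪ [p -[ℝ] b]) \ {z | c < ⟪n, z⟫} ⊆ {a, b} := by
    rintro x ⟨hx | hx, hxc⟩ <;> simp only [mem_ofPred_eq, not_lt] at hxc
    · exact Or.inl (eq_left_of_mem_segment_of_inner_le (ha ▸ hp) hx (ha ▸ hxc))
    · exact Or.inr (eq_left_of_mem_segment_of_inner_le (hb ▸ hp) (segment_symm ℝ p b ▸ hx)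
        (hb ▸ hxc))
  have := Measure.nullSingletonClass_hausdorff E one_pos
  calc μH[1] ([a -[ℝ] p] ∪ [p -[ℝ] b])
      ≤ μH[1] (([a -[ℝ] p] ∪ [p -[ℝ] b]) ∩ {z | c < ⟪n, z⟫})
        + μH[1] (([a -[ℝ] p] ∪ [p -[ℝ] b]) \ {z | c < ⟪n, z⟫}) := measure_le_inter_add_sdiff _ _ _
    _ = μH[1] (([a -[ℝ] p] ∪ [p -[ℝ] b]) ∩ {z | c < ⟪n, z⟫}) := by
      rw [measure_mono_null hends ((toFinite _).measure_zero _), add_zero]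

end Segments

open Real in
theorem hausdorffMeasure_frontier_lt_top {K : Set ℂ} (hKc : IsClosed K) (hK : Convex ℝ K)
    (hKi : (interior K).Nonempty) (hKb : Bornology.IsBounded K) : μH[1] (frontier K) < ⊤ := by
  obtain ⟨R, hR⟩ := hKb.subset_closedBall 0
  calc μH[1] (frontier K) ≤ μH[1] (frontier (closedBall 0 |R|)) :=
        hausdorffMeasure_frontier_le_of_subset hKc hK hKi isBounded_closedBall
          (hR.trans (closedBall_subset_closedBall (le_abs_self R))) zero_le_one
    _ = μH[1] (circleMap 0 R '' Ioc 0 (2 * π)) := by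
        rw [frontier_closedBall', image_circleMap_Ioc]
    _ ≤ Real.nnabs R ^ (1 : ℝ) * μH[1] (Ioc 0 (2 * π)) :=
        (lipschitzWith_circleMap 0 R).hausdorffMeasure_image_le zero_le_one _
    _ < ⊤ := by
        rw [hausdorffMeasure_real, Real.volume_Ioc]
        exact ENNReal.mul_lt_top (by simp) ENNReal.ofReal_lt_top

open Complex in
theorem exists_subset_segment_of_forall_inner_eq {s : Set ℂ} (hs : IsCompact s) (hne : s.Nonempty)
    {n : ℂ} (hn : n ≠ 0) {c : ℝ} (hsc : ∀ z ∈ s, ⟪n, z⟫ = c) :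
    ∃ a ∈ s, ∃ b ∈ s, s ⊆ [a -[ℝ] b] := by
  set g : ℂ → ℝ := fun z => ⟪I * n, z⟫
  have hg : Continuous g := by fun_prop
  obtain ⟨a, ha, hamin⟩ := hs.exists_isMinOn hne hg.continuousOn
  obtain ⟨b, hb, hbmax⟩ := hs.exists_isMaxOn hne hg.continuousOn
  -- `z * conj n = ⟪n, z⟫ + ⟪I * n, z⟫ * I`, so the line `⟪n, ·⟫ = c` is parametrized by `g`
  set e : ℝ →ᵃ[ℝ] ℂ := AffineMap.lineMap (c / conj n) ((c + I) / conj n)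
  have he : ∀ z ∈ s, e (g z) = z := fun z hz => by
    have hconj : conj n ≠ 0 := (map_ne_zero _).2 hn
    have hline : z * conj n = ⟪n, z⟫ + g z * I := by
      apply Complex.ext <;>
        simp only [g, Complex.inner, mul_re, mul_im, conj_re, conj_im, I_re, I_im, add_re, add_im,
          ofReal_re, ofReal_im] <;> ring
    refine mul_right_cancel₀ hconj ?_
    rw [hline, hsc z hz, AffineMap.lineMap_apply_module, Complex.real_smul, Complex.real_smul]
    field_simp
    push_cast
    ring
  refine ⟨a, ha, b, hb, fun z hz => ?_⟩
  rw [← he z hz, ← he a ha, ← he b hb, ← image_segment, segment_eq_Icc (hamin hb)]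
  exact mem_image_of_mem e ⟨hamin hz, hbmax hz⟩

open Complex in
theorem exists_forall_inner_le_of_mem_segment {a p x : ℂ} (b : ℂ) (hap : a ≠ p)
    (hx : x ∈ [a -[ℝ] p]) : ∃ v ≠ 0, ∀ w ∈ convexHull ℝ {a, p, b}, ⟪v, w⟫ ≤ ⟪v, x⟫ := by
  have hnormal : ∀ v : ℂ, ⟪v, p⟫ = ⟪v, a⟫ → ⟪v, b⟫ ≤ ⟪v, a⟫ →
      ∀ w ∈ convexHull ℝ {a, p, b}, ⟪v, w⟫ ≤ ⟪v, x⟫ := by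
    intro v hp hb
    have hxa : ⟪v, x⟫ = ⟪v, a⟫ := by
      obtain ⟨s, t, -, -, hst, rfl⟩ := hx
      rw [inner_add_right, real_inner_smul_right, real_inner_smul_right, hp, ← add_mul, hst,
        one_mul]
    have hH : Convex ℝ {w | ⟪v, w⟫ ≤ ⟪v, a⟫} := convex_halfSpace_le (innerₛₗ ℝ v).isLinear _
    rw [hxa]
    refine convexHull_min (t := {w | ⟪v, w⟫ ≤ ⟪v, a⟫}) ?_ hH
    simp only [insert_subset_iff, singleton_subset_iff]
    exact ⟨show ⟪v, a⟫ ≤ ⟪v, a⟫ from le_rfl, hp.le, hb⟩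
  set v₀ := I * (p - a)
  have hv₀ : v₀ ≠ 0 := mul_ne_zero I_ne_zero (sub_ne_zero.2 hap.symm)
  have hperp : ⟪v₀, p⟫ = ⟪v₀, a⟫ := by
    rw [← sub_eq_zero, ← inner_sub_right]
    simp only [v₀, Complex.inner, mul_re, mul_im, conj_re, conj_im, I_re, I_im, sub_re, sub_im]
    ring
  rcases le_total ⟪v₀, b⟫ ⟪v₀, a⟫ with h | h
  · exact ⟨v₀, hv₀, hnormal v₀ hperp h⟩
  · refine ⟨-v₀, neg_ne_zero.2 hv₀, hnormal (-v₀) ?_ ?_⟩ <;> simp only [inner_neg_left]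
    · rw [hperp]
    · exact neg_le_neg h

theorem IsNearestPointMap.segment_subset_image_frontier {a p b : ℂ} {P : ℂ → ℂ} {L : Set ℂ}
    (hP : IsNearestPointMap (convexHull ℝ {a, p, b}) P) (hap : a ≠ p)
    (hTL : convexHull ℝ {a, p, b} ⊆ L) (hL : Bornology.IsBounded L) :
    [a -[ℝ] p] ⊆ P '' frontier L := fun x hx => by
  obtain ⟨v, hv, hsupp⟩ := exists_forall_inner_le_of_mem_segment b hap hx
  exact hP.mem_image_frontier hTL hL (segment_subset_convexHull (by simp) (by simp) hx) hv hsupp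

theorem hausdorffMeasure_inter_hyperplane_lt_frontier_inter_halfSpace {K : Set ℂ}
    (hK : IsCompact K) (hKc : Convex ℝ K) {n p : ℂ} {c : ℝ}
    (hF : (K ∩ {z | ⟪n, z⟫ = c}).Nonempty) (hp : p ∈ K) (hpc : c < ⟪n, p⟫) :
    μH[1] (K ∩ {z | ⟪n, z⟫ = c}) < μH[1] (frontier K ∩ {z | c < ⟪n, z⟫}) := by
  have hn : n ≠ 0 := by
    rintro rfl
    obtain ⟨z, -, hz⟩ := hF
    simp only [mem_ofPred_eq, inner_zero_left] at hz hpc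
    linarith
  obtain ⟨a, ⟨haK, ha⟩, b, ⟨hbK, hb⟩, hFab⟩ := exists_subset_segment_of_forall_inner_eq
    (hK.inter_right (isClosed_eq (by fun_prop) continuous_const)) hF hn fun z hz => hz.2
  have hap : a ≠ p := fun h => hpc.ne' (h ▸ ha)
  have hbp : b ≠ p := fun h => hpc.ne' (h ▸ hb)
  set L := K ∩ {z | c ≤ ⟪n, z⟫}
  have hTL : convexHull ℝ {a, p, b} ⊆ L := by
    refine convexHull_min ?_ (hKc.inter (convex_halfSpace_ge (innerₛₗ ℝ n).isLinear c))
    simp only [insert_subset_iff, singleton_subset_iff]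
    exact ⟨⟨haK, ha.ge⟩, ⟨hp, hpc.le⟩, ⟨hbK, hb.ge⟩⟩
  obtain ⟨P, hP⟩ := exists_isNearestPointMap ⟨a, subset_convexHull ℝ _ (mem_insert a _)⟩
    ((toFinite {a, p, b}).isCompact_convexHull ℝ).isComplete (convex_convexHull ℝ _)
  have hLb : Bornology.IsBounded L := hK.isBounded.subset inter_subset_left
  have hsides : [a -[ℝ] p] ∪ [p -[ℝ] b] ⊆ P '' frontier L := by
    refine union_subset (hP.segment_subset_image_frontier hap hTL hLb) ?_
    rw [show ({a, p, b} : Set ℂ) = {b, p, a} by simp only [insert_comm, pair_comm]] at hP hTL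
    exact segment_symm ℝ p b ▸ hP.segment_subset_image_frontier hbp hTL hLb
  have hsides' : ([a -[ℝ] p] ∪ [p -[ℝ] b]) ∩ {z | c < ⟪n, z⟫} ⊆
      P '' (frontier K ∩ {z | c < ⟪n, z⟫}) := by
    rintro x ⟨hx, hxc⟩
    obtain ⟨z, hz, rfl⟩ := hsides hx
    have hzL : z ∈ L :=
      (hK.isClosed.inter (isClosed_le continuous_const (by fun_prop))).frontier_subset hz
    -- on the chord `P` is the identity, while `P z` lies strictly above it
    have hzc : c < ⟪n, z⟫ := by
      refine hzL.2.lt_of_ne fun hzc => ?_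
      have hzT : z ∈ convexHull ℝ {a, p, b} :=
        segment_subset_convexHull (by simp) (by simp) (hFab ⟨hzL.1, hzc.symm⟩)
      have hPz : c < ⟪n, P z⟫ := hxc
      rw [hP.apply_eq_self hzT, ← hzc] at hPz
      exact lt_irrefl c hPz
    refine ⟨z, ⟨?_, hzc⟩, rfl⟩
    rcases frontier_inter_setOf_le_subset continuous_const (by fun_prop) hz with hzK | hzc'
    · exact hzK
    · exact absurd hzc' hzc.ne
  calc μH[1] (K ∩ {z | ⟪n, z⟫ = c}) ≤ μH[1] [a -[ℝ] b] := measure_mono hFab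
    _ = edist a b := hausdorffMeasure_segment a b
    _ < μH[1] ([a -[ℝ] p] ∪ [p -[ℝ] b]) := edist_lt_hausdorffMeasure_segment_union ha hb hpc
    _ ≤ μH[1] (([a -[ℝ] p] ∪ [p -[ℝ] b]) ∩ {z | c < ⟪n, z⟫}) :=
        hausdorffMeasure_segment_union_le_inter_halfSpace ha hb hpc
    _ ≤ μH[1] (P '' (frontier K ∩ {z | c < ⟪n, z⟫})) := measure_mono hsides'
    _ ≤ μH[1] (frontier K ∩ {z | c < ⟪n, z⟫}) := hP.hausdorffMeasure_image_le zero_le_one _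

theorem hausdorffMeasure_frontier_inter_halfSpace_lt {K : Set ℂ} (hK : IsCompact K)
    (hKc : Convex ℝ K) (hKi : (interior K).Nonempty) {n p q : ℂ} {c : ℝ} (hp : p ∈ K)
    (hpc : c < ⟪n, p⟫) (hq : q ∈ K) (hqc : ⟪n, q⟫ ≤ c) :
    μH[1] (frontier (K ∩ {z | ⟪n, z⟫ ≤ c})) < μH[1] (frontier K) := by
  have hinner : Continuous fun z : ℂ => ⟪n, z⟫ := by fun_prop
  have hF : (K ∩ {z | ⟪n, z⟫ = c}).Nonempty :=
    hKc.isPreconnected.intermediate_value hq hp hinner.continuousOn ⟨hqc, hpc.le⟩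
  have hcover : frontier (K ∩ {z | ⟪n, z⟫ ≤ c}) ⊆
      (frontier K ∩ {z | ⟪n, z⟫ < c}) ∪ (K ∩ {z | ⟪n, z⟫ = c}) := fun z hz => by
    have hzK := (hK.isClosed.inter (isClosed_le hinner continuous_const)).frontier_subset hz
    rcases frontier_inter_setOf_le_subset hinner continuous_const hz with hzf | hzc
    · rcases (show ⟪n, z⟫ ≤ c from hzK.2).lt_or_eq with hlt | heq
      · exact Or.inl ⟨hzf, hlt⟩
      · exact Or.inr ⟨hzK.1, heq⟩
    · exact Or.inr ⟨hzK.1, hzc⟩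
  have hfin : μH[1] (frontier K ∩ {z | ⟪n, z⟫ < c}) ≠ ⊤ :=
    ne_top_of_le_ne_top (hausdorffMeasure_frontier_lt_top hK.isClosed hKc hKi hK.isBounded).ne
      (measure_mono inter_subset_left)
  have hdisj : Disjoint (frontier K ∩ {z | ⟪n, z⟫ < c}) (frontier K ∩ {z | c < ⟪n, z⟫}) :=
    disjoint_left.2 fun z hz hz' => lt_asymm (show ⟪n, z⟫ < c from hz.2) hz'.2
  calc μH[1] (frontier (K ∩ {z | ⟪n, z⟫ ≤ c}))
      ≤ μH[1] (frontier K ∩ {z | ⟪n, z⟫ < c}) + μH[1] (K ∩ {z | ⟪n, z⟫ = c}) :=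
        (measure_mono hcover).trans (measure_union_le _ _)
    _ < μH[1] (frontier K ∩ {z | ⟪n, z⟫ < c}) + μH[1] (frontier K ∩ {z | c < ⟪n, z⟫}) :=
        ENNReal.add_lt_add_left hfin
          (hausdorffMeasure_inter_hyperplane_lt_frontier_inter_halfSpace hK hKc hF hp hpc)
    _ = μH[1] ((frontier K ∩ {z | ⟪n, z⟫ < c}) ∪ (frontier K ∩ {z | c < ⟪n, z⟫})) :=
        (measure_union hdisj
          (isClosed_frontier.measurableSet.inter (measurableSet_lt measurable_const
            hinner.measurable))).symm
    _ ≤ μH[1] (frontier K) := measure_mono (union_subset inter_subset_left inter_subset_left)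

theorem perimeter_lt_of_convex_subset_general
    (K₁ K₂ : Set ℂ) (h₁ : IsCompact K₁) (h₂ : IsCompact K₂)
    (hc₁ : Convex ℝ K₁) (hc₂ : Convex ℝ K₂)
    (hint₁ : (interior K₁).Nonempty)
    (hsub : K₁ ⊆ K₂) (hne : K₁ ≠ K₂) :
    μH[1] (frontier K₁) < μH[1] (frontier K₂) := by
  obtain ⟨p, hp₂, hp₁⟩ := not_subset.1 fun h => hne (hsub.antisymm h)
  obtain ⟨f, c, hf₁, hfp⟩ := geometric_hahn_banach_closed_point hc₁ h₁.isClosed hp₁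
  set n := (InnerProductSpace.toDual ℝ ℂ).symm f
  have hn : ∀ z, ⟪n, z⟫ = f z := fun z => InnerProductSpace.toDual_symm_apply
  have hK₁ : K₁ ⊆ K₂ ∩ {z | ⟪n, z⟫ ≤ c} := fun z hz => ⟨hsub hz, (hn z).trans_le (hf₁ z hz).le⟩
  obtain ⟨q, hq⟩ := hint₁.mono interior_subset
  calc μH[1] (frontier K₁) ≤ μH[1] (frontier (K₂ ∩ {z | ⟪n, z⟫ ≤ c})) :=
        hausdorffMeasure_frontier_le_of_subset h₁.isClosed hc₁ hint₁
          (h₂.isBounded.subset inter_subset_left) hK₁ zero_le_one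
    _ < μH[1] (frontier K₂) :=
        hausdorffMeasure_frontier_inter_halfSpace_lt h₂ hc₂ (hint₁.mono (interior_mono hsub)) hp₂
          ((hn p).trans_gt hfp) (hsub hq) (hK₁ hq).2

/-- If a convex closed curve γ₁ (boundary of the compact convex set `K₁`) lies completely
inside a convex closed curve γ₂ (boundary of `K₂`), and the curves are distinct, then the
perimeter (1-dimensional Hausdorff measure of the boundary) of γ₁ is strictly less than
that of γ₂. -/
theorem perimeter_lt_of_convex_subset
    (K₁ K₂ : Set ℂ) (h₁ : IsCompact K₁) (h₂ : IsCompact K₂)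
    (hc₁ : Convex ℝ K₁) (hc₂ : Convex ℝ K₂)
    (hint₁ : (interior K₁).Nonempty) (hint₂ : (interior K₂).Nonempty)
    (hsub : K₁ ⊆ K₂) (hne : K₁ ≠ K₂) :
    μH[1] (frontier K₁) < μH[1] (frontier K₂) :=
  perimeter_lt_of_convex_subset_general K₁ K₂ h₁ h₂ hc₁ hc₂ hint₁ hsub hne
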